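/- arXiv:2501.11555 — 4 statements merged into one kernel-verified Lean document; each statement's English description precedes it below -/
import Mathlib

section
/- Let X be a real symmetric p×p matrix with spectral decomposition X = V D Vᵀ, where V is a p×p orthogonal matrix and D is diagonal with decreasing diagonal entries d₁ ≥ d₂ ≥ … ≥ d_p. Let 1 ≤ k ≤ p and let V_k denote the p×k matrix formed by the first k columns of V (eigenvectors associated with the k largest eigenvalues of X). Then for every real symmetric p×p matrix P satisfying P² = P and rank(P) = k, one has ‖X − V_k V_kᵀ‖² ≤ ‖X − P‖². In other words, V_k V_kᵀ minimizes the squared Frobenius distance from X over the Grassmann manifold of rank-k orthogonal projectors. -/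
/-!
For a symmetric idempotent `M`, `‖X - M‖² = ‖X‖² - 2 tr(XM) + tr M` and `tr M = rank M`,
so over rank-`k` projectors one has to maximise `tr(XP)`. With `Q = Vᵀ P V`, again a
symmetric projector, `tr(XP) = ∑ dᵢ Qᵢᵢ`; the diagonal of `Q` lies in `[0, 1]`
(as `Qᵢᵢ = ∑ⱼ Qᵢⱼ²`) and sums to `k`. A weighted sum of the decreasing `dᵢ` with such
weights is at most `d₁ + ⋯ + d_k` (compare termwise after subtracting a threshold `c`
separating the top `k` values from the rest), and `V_k V_kᵀ` attains this bound.
-/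

open Matrix

/-- Squared Frobenius norm of a real matrix: `‖M‖² = tr(MᵀM)`. -/
noncomputable def frobSq {p q : ℕ} (M : Matrix (Fin p) (Fin q) ℝ) : ℝ :=
  Matrix.trace (Mᵀ * M)

open Finset

theorem Antitone.exists_threshold_castLE {α : Type*} [LinearOrder α] [Nonempty α] {p k : ℕ}
    {d : Fin p → α} (hd : Antitone d) (hkp : k ≤ p) :
    ∃ c, (∀ i ∈ univ.map (Fin.castLEEmb hkp), c ≤ d i) ∧
      ∀ i ∉ univ.map (Fin.castLEEmb hkp), d i ≤ c := by
  have hmem : ∀ i, i ∈ univ.map (Fin.castLEEmb hkp) ↔ (i : ℕ) < k := by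
    intro i
    rw [← mem_coe, coe_map, coe_univ, Set.image_univ]
    exact Set.ext_iff.mp (Fin.range_castLE hkp) i
  simp only [hmem, not_lt]
  rcases p with _ | n
  · exact ⟨Classical.arbitrary α, fun i => i.elim0, fun i => i.elim0⟩
  · refine ⟨d ⟨min k n, by omega⟩, fun i hi => hd ?_, fun i hi => hd ?_⟩ <;>
      simp only [Fin.le_def] <;> omega

namespace Matrix

section CommRing

variable {m n R : Type*} [Fintype n] [CommRing R]

theorem IsDiag.trace_mul [DecidableEq n] {D : Matrix n n R} (hD : D.IsDiag) (M : Matrix n n R) :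
    (D * M).trace = ∑ i, D i i * M i i := by
  conv_lhs => rw [← hD.diagonal_diag]
  simp only [trace, diag_apply, diagonal_mul]

theorem IsSymm.transpose_mul_mul {P : Matrix n n R} (hP : P.IsSymm) (V : Matrix n m R) :
    (Vᵀ * P * V).IsSymm := by
  rw [IsSymm, transpose_mul, transpose_mul, transpose_transpose, hP.eq, Matrix.mul_assoc]

theorem isIdempotentElem_transpose_mul_mul [DecidableEq n] {P V : Matrix n n R}
    (hP : IsIdempotentElem P) (hV : V * Vᵀ = 1) : IsIdempotentElem (Vᵀ * P * V) := by
  calc Vᵀ * P * V * (Vᵀ * P * V) = Vᵀ * (P * (V * Vᵀ) * P) * V := by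
        simp only [Matrix.mul_assoc]
    _ = Vᵀ * P * V := by rw [hV, Matrix.mul_one, hP.eq, Matrix.mul_assoc]

theorem submatrix_id_transpose_mul_mul (V M : Matrix n n R) (f : m → n) :
    (V.submatrix id f)ᵀ * M * V.submatrix id f = (Vᵀ * M * V).submatrix f f := by
  rw [submatrix_mul _ _ _ _ _ Function.bijective_id, submatrix_mul _ _ _ _ _ Function.bijective_id,
    transpose_submatrix, submatrix_id_id]

theorem trace_mul_eq_trace_mul_transpose_mul_mul {X V D M : Matrix n n R} (hX : X = V * D * Vᵀ) :
    (X * M).trace = (D * (Vᵀ * M * V)).trace := by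
  rw [hX, Matrix.mul_assoc, trace_mul_comm, ← Matrix.mul_assoc, trace_mul_comm]

theorem trace_mul_submatrix_mul_transpose [Fintype m] [DecidableEq n] {X V D : Matrix n n R}
    (hV : Vᵀ * V = 1) (hXVD : X = V * D * Vᵀ) (f : m → n) :
    (X * (V.submatrix id f * (V.submatrix id f)ᵀ)).trace = ∑ a, D (f a) (f a) := by
  rw [← Matrix.mul_assoc, trace_mul_comm, ← Matrix.mul_assoc, submatrix_id_transpose_mul_mul,
    hXVD, Matrix.mul_assoc, Matrix.mul_assoc, hV, Matrix.mul_one, ← Matrix.mul_assoc, hV,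
    Matrix.one_mul]
  rfl

end CommRing

theorem trace_eq_rank_of_isIdempotentElem {K n : Type*} [Field K] [Fintype n] [DecidableEq n]
    {P : Matrix n n K} (hP : IsIdempotentElem P) : P.trace = P.rank := by
  have h : IsIdempotentElem (toLin' P) := hP.map (toLinAlgEquiv' (R := K) (n := n))
  rw [← trace_toLin'_eq, (LinearMap.IsIdempotentElem.isProj_range _ h).trace, rank]
  rfl

end Matrix

section OrderedRing

variable {ι R : Type*} [Fintype ι] [CommRing R] [LinearOrder R] [IsStrictOrderedRing R]

theorem sum_mul_le_sum_of_threshold (S : Finset ι) {d q : ι → R} {c : R}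
    (hS : ∀ i ∈ S, c ≤ d i) (hSc : ∀ i ∉ S, d i ≤ c)
    (hq : ∀ i, q i ∈ Set.Icc 0 1) (hsum : ∑ i, q i = #S) :
    ∑ i, d i * q i ≤ ∑ i ∈ S, d i := by
  classical
  have termwise : ∀ i, (d i - c) * q i ≤ if i ∈ S then d i - c else 0 := by
    intro i
    obtain ⟨hq0, hq1⟩ := hq i
    split_ifs with hi
    · nlinarith [hS i hi]
    · nlinarith [hSc i hi]
  have hsum_le := sum_le_sum fun i (_ : i ∈ univ) => termwise i
  rw [sum_ite_mem, univ_inter, sum_sub_distrib, sum_const, nsmul_eq_mul] at hsum_le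
  simp only [sub_mul, sum_sub_distrib, ← mul_sum, hsum] at hsum_le
  linarith

theorem Matrix.IsSymm.diag_mem_Icc_of_isIdempotentElem {Q : Matrix ι ι R} (hs : Q.IsSymm)
    (hi : IsIdempotentElem Q) (i : ι) : Q i i ∈ Set.Icc 0 1 := by
  have hdiag : Q i i = ∑ j, Q i j ^ 2 := by
    conv_lhs => rw [← hi.eq]
    simp only [mul_apply, sq, hs.apply]
  have h0 : 0 ≤ Q i i := hdiag ▸ sum_nonneg fun j _ => sq_nonneg _
  have hsq : Q i i ^ 2 ≤ Q i i :=
    hdiag ▸ single_le_sum (fun j _ => sq_nonneg (Q i j)) (mem_univ i)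
  exact ⟨h0, by nlinarith⟩

theorem trace_mul_le_sum_castLE {p k : ℕ} (hkp : k ≤ p) {X V D P : Matrix (Fin p) (Fin p) R}
    (hV : V * Vᵀ = 1) (hD : D.IsDiag) (hdec : Antitone fun i => D i i) (hXVD : X = V * D * Vᵀ)
    (hP : P.IsSymm) (hPP : IsIdempotentElem P) (hPtr : P.trace = k) :
    (X * P).trace ≤ ∑ a, D (Fin.castLE hkp a) (Fin.castLE hkp a) := by
  have hQtr : ∑ i, (Vᵀ * P * V) i i = #(univ.map (Fin.castLEEmb hkp)) := by
    rw [card_map, card_univ, Fintype.card_fin, ← hPtr]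
    change (Vᵀ * P * V).trace = P.trace
    rw [trace_mul_cycle, hV, Matrix.one_mul]
  obtain ⟨c, hc, hc'⟩ := hdec.exists_threshold_castLE hkp
  rw [trace_mul_eq_trace_mul_transpose_mul_mul hXVD, hD.trace_mul]
  exact (sum_mul_le_sum_of_threshold _ hc hc'
    ((hP.transpose_mul_mul V).diag_mem_Icc_of_isIdempotentElem
      (isIdempotentElem_transpose_mul_mul hPP hV)) hQtr).trans_eq (sum_map _ _ _)

end OrderedRing

theorem frobSq_sub_of_isIdempotentElem {p : ℕ} {X M : Matrix (Fin p) (Fin p) ℝ} (hX : X.IsSymm)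
    (hM : M.IsSymm) (hMM : IsIdempotentElem M) :
    frobSq (X - M) = (X * X).trace - 2 * (X * M).trace + M.trace := by
  rw [frobSq, transpose_sub, hX.eq, hM.eq, sub_mul, mul_sub, mul_sub, hMM.eq, trace_sub, trace_sub,
    trace_sub, trace_mul_comm M X]
  ring

theorem grassmann_projection_general {p k : ℕ} (hkp : k ≤ p)
    (X V D : Matrix (Fin p) (Fin p) ℝ)
    (hX : Xᵀ = X)
    (hV : Vᵀ * V = 1)
    (hD : D.IsDiag)
    (hdec : ∀ i j : Fin p, i ≤ j → D j j ≤ D i i)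
    (hXVD : X = V * D * Vᵀ)
    (Vk : Matrix (Fin p) (Fin k) ℝ)
    (hVk : Vk = V.submatrix id (Fin.castLE hkp))
    (P : Matrix (Fin p) (Fin p) ℝ)
    (hP : Pᵀ = P) (hPproj : P * P = P) (hPrank : P.rank = k) :
    frobSq (X - Vk * Vkᵀ) ≤ frobSq (X - P) := by
  have hVkVk : Vkᵀ * Vk = 1 := by
    simpa [← hVk, hV, submatrix_one _ (Fin.castLE_injective hkp)] using
      submatrix_id_transpose_mul_mul V 1 (Fin.castLE hkp)
  have hRs : (Vk * Vkᵀ).IsSymm := by rw [IsSymm, transpose_mul, transpose_transpose]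
  have hR : IsIdempotentElem (Vk * Vkᵀ) := by
    rw [IsIdempotentElem, Matrix.mul_assoc, ← Matrix.mul_assoc Vkᵀ, hVkVk, Matrix.one_mul]
  have hRtr : (Vk * Vkᵀ).trace = k := by
    rw [trace_mul_comm, hVkVk, trace_one, Fintype.card_fin]
  have hPtr : P.trace = k := by rw [trace_eq_rank_of_isIdempotentElem hPproj, hPrank]
  have hXR := trace_mul_submatrix_mul_transpose hV hXVD (Fin.castLE hkp)
  have hXP := trace_mul_le_sum_castLE hkp (mul_eq_one_comm.mp hV) hD (fun i j h => hdec i j h) hXVD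
    hP hPproj hPtr
  rw [frobSq_sub_of_isIdempotentElem hX hRs hR, frobSq_sub_of_isIdempotentElem hX hP hPproj, hRtr,
    hPtr, hVk]
  linarith

/-- **Projection on the Grassmann manifold.**
If `X = V * D * Vᵀ` is a spectral decomposition of the symmetric matrix `X`
(`V` orthogonal, `D` diagonal with decreasing diagonal entries), and `Vk` is the
`p×k` matrix of the first `k` columns of `V`, then `Vk * Vkᵀ` minimizes the
squared Frobenius distance from `X` over the set of symmetric rank-`k`
orthogonal projectors. -/
theorem grassmann_projection {p k : ℕ} (hk1 : 1 ≤ k) (hkp : k ≤ p)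
    (X V D : Matrix (Fin p) (Fin p) ℝ)
    (hX : Xᵀ = X)
    (hV : Vᵀ * V = 1)
    (hD : D.IsDiag)
    (hdec : ∀ i j : Fin p, i ≤ j → D j j ≤ D i i)
    (hXVD : X = V * D * Vᵀ)
    (Vk : Matrix (Fin p) (Fin k) ℝ)
    (hVk : Vk = V.submatrix id (Fin.castLE hkp))
    (P : Matrix (Fin p) (Fin p) ℝ)
    (hP : Pᵀ = P) (hPproj : P * P = P) (hPrank : P.rank = k) :
    frobSq (X - Vk * Vkᵀ) ≤ frobSq (X - P) :=
  grassmann_projection_general hkp X V D hX hV hD hdec hXVD Vk hVk P hP hPproj hPrank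
end

section
/- Let M₁, …, M_n be real p×k matrices with MᵢᵀMᵢ = I_k for all i, let Ā = (1/n)·Σᵢ Mᵢ be their arithmetic mean, and suppose Ā = G H with G a real p×k matrix satisfying GᵀG = I_k and H a real symmetric k×k matrix (polar decomposition of Ā). Then (1/n)·Σᵢ [(Mᵢ − G) − G·sym(Gᵀ(Mᵢ − G))] = 0. Consequently the polar factor of the arithmetic mean is a closed-form solution of the R-barycenter fixed-point equation on the Stiefel manifold associated with the orthographic retraction: no iterative procedure is needed. -/
open Matrix

/-- Symmetric part of a square matrix: `sym(M) = (M + Mᵀ)/2`. -/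
noncomputable def symPart {k : ℕ} (M : Matrix (Fin k) (Fin k) ℝ) :
    Matrix (Fin k) (Fin k) ℝ :=
  (1 / 2 : ℝ) • (M + Mᵀ)

/-- **Closed form for the orthographic `R`-barycenter on the Stiefel manifold.**
If `M₁, …, Mₙ` lie on the Stiefel manifold, `Ā` is their arithmetic mean and
`Ā = G * H` is a polar decomposition (`GᵀG = I`, `H` symmetric), then the
average of the orthographic liftings of the samples at `G` vanishes:
`(1/n)·Σᵢ [(Mᵢ − G) − G·sym(Gᵀ(Mᵢ − G))] = 0`. -/
theorem polar_mean_is_orthographic_R_barycenter {p k n : ℕ} (hn : 0 < n)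
    (M : Fin n → Matrix (Fin p) (Fin k) ℝ)
    (hM : ∀ i, (M i)ᵀ * M i = 1)
    (Abar G : Matrix (Fin p) (Fin k) ℝ) (H : Matrix (Fin k) (Fin k) ℝ)
    (hAbar : Abar = (1 / (n : ℝ)) • ∑ i, M i)
    (hG : Gᵀ * G = 1) (hH : Hᵀ = H) (hpolar : Abar = G * H) :
    (1 / (n : ℝ)) • ∑ i, ((M i - G) - G * symPart (Gᵀ * (M i - G))) = 0 := by
  have hn' : (n : ℝ) ≠ 0 := Nat.cast_ne_zero.mpr hn.ne'
  have hS : ∑ i, M i = (n : ℝ) • (G * H) := by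
    have h1 : (1 / (n : ℝ)) • ∑ i, M i = G * H := by rw [← hAbar, hpolar]
    calc ∑ i, M i = (n : ℝ) • ((1 / (n : ℝ)) • ∑ i, M i) := by
          rw [smul_smul, mul_one_div, div_self hn', one_smul]
      _ = (n : ℝ) • (G * H) := by rw [h1]
  suffices h : ∑ i, ((M i - G) - G * symPart (Gᵀ * (M i - G))) = 0 by
    rw [h, smul_zero]
  have key : ∀ i, (M i - G) - G * symPart (Gᵀ * (M i - G))
      = M i - (1 / 2 : ℝ) • (G * (Gᵀ * M i) + G * ((M i)ᵀ * G)) := by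
    intro i
    unfold symPart
    rw [Matrix.mul_sub, transpose_sub, transpose_mul, transpose_transpose, hG]
    rw [transpose_one, Matrix.mul_smul]
    rw [Matrix.mul_add, Matrix.mul_sub, Matrix.mul_sub, Matrix.mul_one]
    module
  rw [Finset.sum_congr rfl fun i _ => key i]
  rw [Finset.sum_sub_distrib, ← Finset.smul_sum, Finset.sum_add_distrib]
  have h1 : ∑ i, G * (Gᵀ * M i) = (n : ℝ) • (G * H) := by
    rw [← Matrix.mul_sum, ← Matrix.mul_sum, hS]
    rw [Matrix.mul_smul, Matrix.mul_smul, ← Matrix.mul_assoc Gᵀ, hG, Matrix.one_mul]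
  have h2 : ∑ i, G * ((M i)ᵀ * G) = (n : ℝ) • (G * H) := by
    have : ∑ i, (M i)ᵀ = ((n : ℝ) • (G * H))ᵀ := by
      rw [← hS, transpose_sum]
    rw [← Matrix.mul_sum, ← Matrix.sum_mul, this, transpose_smul, transpose_mul, hH]
    rw [Matrix.smul_mul, Matrix.mul_smul, Matrix.mul_assoc, hG, Matrix.mul_one]
  rw [h1, h2, hS]
  module
end

section
/- Let Q be a real p×k matrix and Q⊥ a real p×(p−k) matrix with QᵀQ = I_k, Q⊥ᵀQ⊥ = I_{p−k} and Q⊥ᵀQ = 0. Let R be an invertible upper triangular k×k matrix, Ω a skew-symmetric k×k matrix, K a real (p−k)×k matrix, and dR an upper triangular k×k matrix. Define ΔQ = QΩ + Q⊥K and ΔB = ΔQ·R + Q·dR. Then ΔQ = Q⊥Q⊥ᵀ·ΔB·R⁻¹ + Q·(tril(QᵀΔB·R⁻¹) − tril(QᵀΔB·R⁻¹)ᵀ). This identity expresses the differential of the Q-factor of the QR decomposition in terms of the differential of the decomposed matrix. -/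
open Matrix

/-- Strictly lower triangular part of a square matrix. -/
def tril {k : ℕ} (M : Matrix (Fin k) (Fin k) ℝ) : Matrix (Fin k) (Fin k) ℝ :=
  Matrix.of fun i j => if j < i then M i j else 0

/-- **Differential of the Q-factor of the QR decomposition.**
With `Q` orthonormal, `Q⊥` an orthonormal complement, `R` invertible upper
triangular, `Ω` skew-symmetric, `dR` upper triangular, and
`ΔQ = QΩ + Q⊥K`, `ΔB = ΔQ·R + Q·dR`, one has
`ΔQ = Q⊥Q⊥ᵀ·ΔB·R⁻¹ + Q·(tril(QᵀΔB·R⁻¹) − tril(QᵀΔB·R⁻¹)ᵀ)`. -/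
theorem qr_factor_differential {p k : ℕ}
    (Q : Matrix (Fin p) (Fin k) ℝ) (Qperp : Matrix (Fin p) (Fin (p - k)) ℝ)
    (hQ : Qᵀ * Q = 1) (hQperp : Qperpᵀ * Qperp = 1) (horth : Qperpᵀ * Q = 0)
    (R : Matrix (Fin k) (Fin k) ℝ) (hRut : ∀ i j : Fin k, j < i → R i j = 0)
    (hRinv : IsUnit R.det)
    (Ω : Matrix (Fin k) (Fin k) ℝ) (hΩ : Ωᵀ = -Ω)
    (K : Matrix (Fin (p - k)) (Fin k) ℝ)
    (dR : Matrix (Fin k) (Fin k) ℝ) (hdR : ∀ i j : Fin k, j < i → dR i j = 0)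
    (ΔQ ΔB : Matrix (Fin p) (Fin k) ℝ)
    (hΔQ : ΔQ = Q * Ω + Qperp * K)
    (hΔB : ΔB = ΔQ * R + Q * dR) :
    ΔQ = Qperp * Qperpᵀ * ΔB * R⁻¹ +
      Q * (tril (Qᵀ * ΔB * R⁻¹) - (tril (Qᵀ * ΔB * R⁻¹))ᵀ) := by
  haveI : Invertible R := R.invertibleOfIsUnitDet hRinv
  -- R⁻¹ is upper triangular
  have hRinvUt : R⁻¹.BlockTriangular (id : Fin k → Fin k) :=
    Matrix.blockTriangular_inv_of_blockTriangular (fun i j h => hRut i j h)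
  have hUut : (dR * R⁻¹).BlockTriangular (id : Fin k → Fin k) :=
    Matrix.BlockTriangular.mul (fun i j h => hdR i j h) hRinvUt
  have hQQperp : Qᵀ * Qperp = 0 := by
    have := congrArg Matrix.transpose horth
    simpa using this
  have hBR : ΔB * R⁻¹ = ΔQ + Q * (dR * R⁻¹) := by
    rw [hΔB, Matrix.add_mul, Matrix.mul_assoc ΔQ, Matrix.mul_nonsing_inv R hRinv,
      Matrix.mul_one, Matrix.mul_assoc]
  have hQB : Qᵀ * ΔB * R⁻¹ = Ω + dR * R⁻¹ := by
    rw [Matrix.mul_assoc, hBR, Matrix.mul_add, hΔQ, Matrix.mul_add, ← Matrix.mul_assoc,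
      ← Matrix.mul_assoc, hQ, hQQperp, Matrix.one_mul, Matrix.zero_mul, add_zero,
      ← Matrix.mul_assoc, hQ, Matrix.one_mul]
  have hQpB : Qperpᵀ * ΔB * R⁻¹ = K := by
    rw [Matrix.mul_assoc, hBR, Matrix.mul_add, hΔQ, Matrix.mul_add, ← Matrix.mul_assoc,
      ← Matrix.mul_assoc, horth, hQperp, Matrix.zero_mul, Matrix.one_mul, zero_add,
      ← Matrix.mul_assoc, horth, Matrix.zero_mul, add_zero]
  have hdiag : ∀ i, Ω i i = 0 := by
    intro i
    have := congrFun (congrFun hΩ i) i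
    simp only [Matrix.transpose_apply, Matrix.neg_apply] at this
    linarith
  have hskew : ∀ i j, Ω j i = -Ω i j := by
    intro i j
    have := congrFun (congrFun hΩ i) j
    simpa using this
  have htril : tril (Ω + dR * R⁻¹) - (tril (Ω + dR * R⁻¹))ᵀ = Ω := by
    ext i j
    simp only [tril, Matrix.sub_apply, Matrix.transpose_apply, Matrix.add_apply, Matrix.of_apply]
    rcases lt_trichotomy i j with h | h | h
    · simp [not_lt.mpr h.le, h, hUut h, hskew j i]
    · simp [h, hdiag j]
    · simp [not_lt.mpr h.le, h, hUut h]
  rw [hQB, htril, Matrix.mul_assoc Qperp Qperpᵀ ΔB, Matrix.mul_assoc Qperp, hQpB, hΔQ,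
    add_comm]
end

section
/- Let G be a real p×k matrix with GᵀG = I_k, let G⊥ be a real p×(p−k) matrix with G⊥ᵀG = 0, and let R be an upper triangular k×k matrix. Set Δ = GR − G. Then G⊥G⊥ᵀ·Δ + G·(tril(GᵀΔ) − tril(GᵀΔ)ᵀ) = 0. Consequently, if samples M₁, …, M_n on the Stiefel manifold have arithmetic mean Ā = GR with G ∈ St(p,k) and R upper triangular (QR decomposition of Ā), then the QR-based lifting of Ā at G vanishes, so the Q-factor of the arithmetic mean is the RL-barycenter of the samples for the QR retraction and the lifting given by the differential of the QR orthogonal factor. -/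
open Matrix

/-- **The Q-factor of the arithmetic mean is the QR-based `RL`-barycenter.**
If `G` has orthonormal columns, `G⊥ᵀG = 0` and `R` is upper triangular, then
with `Δ = GR − G` (the difference between a matrix with QR decomposition `GR`
and its Q-factor `G`), the QR-based lifting of `GR` at `G` vanishes:
`G⊥G⊥ᵀ·Δ + G·(tril(GᵀΔ) − tril(GᵀΔ)ᵀ) = 0`. -/
theorem qr_mean_lifting_vanishes {p k : ℕ}
    (G : Matrix (Fin p) (Fin k) ℝ) (Gperp : Matrix (Fin p) (Fin (p - k)) ℝ)
    (hG : Gᵀ * G = 1) (horth : Gperpᵀ * G = 0)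
    (R : Matrix (Fin k) (Fin k) ℝ) (hRut : ∀ i j : Fin k, j < i → R i j = 0)
    (Δ : Matrix (Fin p) (Fin k) ℝ) (hΔ : Δ = G * R - G) :
    Gperp * Gperpᵀ * Δ + G * (tril (Gᵀ * Δ) - (tril (Gᵀ * Δ))ᵀ) = 0 := by
  have h1 : Gperpᵀ * Δ = 0 := by
    rw [hΔ, Matrix.mul_sub, ← Matrix.mul_assoc, horth, Matrix.zero_mul, sub_zero]
  have h2 : Gᵀ * Δ = R - 1 := by
    rw [hΔ, Matrix.mul_sub, ← Matrix.mul_assoc, hG, Matrix.one_mul]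
  have h3 : tril (Gᵀ * Δ) = 0 := by
    rw [h2]
    ext i j
    simp only [tril, Matrix.of_apply, Matrix.sub_apply, Matrix.zero_apply]
    split
    · next h =>
      rw [hRut i j h, Matrix.one_apply_ne (fun hij => by subst hij; exact lt_irrefl _ h)]
      ring
    · rfl
  rw [h3]
  simp [Matrix.mul_assoc, h1]
end
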